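/- arXiv:1705.01838 — 3 statements merged into one kernel-verified Lean document; each statement's English description precedes it below -/
import Mathlib

section
/- Let q = 2^m with m ≥ 2 and n ≥ 1. Every affine automorphism of F_q^n, i.e., every map x ↦ Ax + b with A ∈ GL_n(F_q) and b ∈ F_q^n, induces an even permutation of F_q^n. -/
/-!
The sign is a homomorphism to an abelian group, so it kills commutators. Pick `l ∈ F` with
`l ≠ 0, 1` (possible as `q > 2`). The translation by `(l - 1) • w` is the commutator of
`v ↦ l • v` with the translation by `w`, and the transvection `T_ij((l - 1) c)` is the
commutator of `diag(1, …, l, …, 1)` (with `l` in position `i`) with `T_ij(c)`; hence both are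
even. In characteristic 2 every element of `F` is a square, so an invertible diagonal matrix is
the square of one and is even as well. Since diagonal matrices and transvections generate
`GL_n(F)`, every `x ↦ Ax + b` is even.
-/

open Matrix Equiv

-- The hypothesis says `k = ⁅g, h⁆`.
theorem MonoidHom.map_eq_one_of_mul_eq {G M : Type*} [Group G] [CommGroup M] (f : G →* M)
    {g h k : G} (hk : g * h = k * h * g) : f k = 1 := by
  have := congrArg f hk
  rw [map_mul, map_mul, map_mul, mul_right_comm (f k), mul_assoc] at this
  exact mul_eq_right.mp this.symm

theorem FiniteField.exists_ne_zero_ne_one {F : Type*} [Field F] [Fintype F]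
    (hF : 2 < Fintype.card F) : ∃ l : F, l ≠ 0 ∧ l ≠ 1 := by
  classical
  obtain ⟨l, hl⟩ :=
    Fintype.exists_ne_of_one_lt_card (by rw [Fintype.card_units]; omega) (1 : Fˣ)
  exact ⟨l, l.ne_zero, Units.val_eq_one.not.mpr hl⟩

theorem MulAction.toPerm_mul_addRight {R V : Type*} [Ring R] [AddCommGroup V] [Module R V]
    (l : Rˣ) (w : V) :
    toPerm l * Equiv.addRight w =
      Equiv.addRight (((l : R) - 1) • w) * Equiv.addRight w * toPerm l := by
  ext v
  simp [smul_add, sub_smul, Units.smul_def]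

theorem Equiv.Perm.sign_addRight {F V : Type*} [Field F] [Fintype F] [AddCommGroup V] [Module F V]
    [Fintype V] [DecidableEq V] (hF : 2 < Fintype.card F) (u : V) :
    sign (Equiv.addRight u) = 1 := by
  obtain ⟨l, hl0, hl1⟩ := FiniteField.exists_ne_zero_ne_one hF
  rw [← smul_inv_smul₀ (sub_ne_zero.mpr hl1) u]
  exact sign.map_eq_one_of_mul_eq (MulAction.toPerm_mul_addRight (Units.mk0 l hl0) _)

theorem Matrix.diagonal_mulSingle_mul_transvection {ι R : Type*} [Fintype ι] [DecidableEq ι]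
    [CommRing R] {i j : ι} (hij : i ≠ j) (l c : R) :
    diagonal (Pi.mulSingle i l) * transvection i j c =
      transvection i j (l * c) * diagonal (Pi.mulSingle i l) := by
  ext a b
  simp only [diagonal_mul, mul_diagonal, transvection, Matrix.add_apply, one_apply, single_apply,
    Pi.mulSingle_apply]
  split_ifs <;> subst_vars <;> simp_all

namespace Matrix.GeneralLinearGroup

variable {ι : Type*} [Fintype ι] [DecidableEq ι]

def mulVecPerm {R : Type*} [CommRing R] : GL ι R →* Perm (ι → R) where
  toFun A :=
    { toFun := ((A : Matrix ι ι R) *ᵥ ·)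
      invFun := ((↑A⁻¹ : Matrix ι ι R) *ᵥ ·)
      left_inv v := by simp [mulVec_mulVec]
      right_inv v := by simp [mulVec_mulVec] }
  map_one' := by ext; simp
  map_mul' A B := by ext; simp [mulVec_mulVec]

@[simp]
theorem mulVecPerm_apply {R : Type*} [CommRing R] (A : GL ι R) (v : ι → R) :
    mulVecPerm A v = (A : Matrix ι ι R) *ᵥ v :=
  rfl

variable {F : Type*} [Field F] [Fintype F] [DecidableEq F]

theorem sign_mulVecPerm_of_eq_diagonal (hF : ringChar F = 2) (A : GL ι F) {d : ι → F}
    (hA : (A : Matrix ι ι F) = diagonal d) : Perm.sign (mulVecPerm A) = 1 := by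
  choose e he using fun i => FiniteField.isSquare_of_char_two hF (d i)
  have hsq : diagonal e * diagonal e = (A : Matrix ι ι F) := by
    rw [hA, diagonal_mul_diagonal]
    exact congrArg diagonal (funext he).symm
  have he : Matrix.det (diagonal e) ≠ 0 := by
    have hA' := (isUnit_iff_isUnit_det _).mp A.isUnit
    rw [← hsq, det_mul] at hA'
    exact (isUnit_of_mul_isUnit_left hA').ne_zero
  have : A = mkOfDetNeZero _ he ^ 2 := Units.ext (by simp [pow_two, hsq])
  rw [this, map_pow, map_pow, Int.units_sq]

theorem sign_mulVecPerm_of_eq_transvection (hF : 2 < Fintype.card F) (A : GL ι F) {i j : ι}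
    (hij : i ≠ j) (c : F) (hA : (A : Matrix ι ι F) = transvection i j c) :
    Perm.sign (mulVecPerm A) = 1 := by
  obtain ⟨l, hl0, hl1⟩ := FiniteField.exists_ne_zero_ne_one hF
  have hD : Matrix.det (diagonal (Pi.mulSingle i l)) ≠ 0 := by simp [det_diagonal, hl0]
  have hT : Matrix.det (transvection i j ((l - 1)⁻¹ * c)) ≠ 0 := by
    simp [det_transvection_of_ne _ _ hij]
  have hw : l * ((l - 1)⁻¹ * c) = c + (l - 1)⁻¹ * c := by
    field_simp [sub_ne_zero.mpr hl1]
    ring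
  refine (Perm.sign.comp mulVecPerm).map_eq_one_of_mul_eq (g := mkOfDetNeZero _ hD)
    (h := mkOfDetNeZero _ hT) (Units.ext ?_)
  simp only [Units.val_mul, val_mkOfDetNeZero, hA, diagonal_mulSingle_mul_transvection hij,
    transvection_mul_transvection_same _ _ hij, hw]

theorem sign_mulVecPerm (hchar : ringChar F = 2) (hF : 2 < Fintype.card F) (A : GL ι F) :
    Perm.sign (mulVecPerm A) = 1 := by
  refine diagonal_transvection_induction_of_det_ne_zero
    (fun M => ∀ B : GL ι F, (B : Matrix ι ι F) = M → Perm.sign (mulVecPerm B) = 1) A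
    ((isUnit_iff_isUnit_det _).mp A.isUnit).ne_zero ?_ ?_ ?_ A rfl
  · exact fun D _ B hB => sign_mulVecPerm_of_eq_diagonal hchar B hB
  · exact fun t B hB => sign_mulVecPerm_of_eq_transvection hF B t.hij t.c hB
  · intro M N hM hN ihM ihN B hB
    have : B = mkOfDetNeZero M hM * mkOfDetNeZero N hN := Units.ext (by simp [hB])
    rw [this, map_mul, map_mul, ihM _ (val_mkOfDetNeZero _ _), ihN _ (val_mkOfDetNeZero _ _),
      one_mul]

end Matrix.GeneralLinearGroup

theorem stmt9_general (m n : ℕ) (hm : 2 ≤ m)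
    (F : Type) [Field F] [Fintype F] [DecidableEq F]
    (hcard : Fintype.card F = 2 ^ m)
    (A : Matrix (Fin n) (Fin n) F) (hA : IsUnit A) (b : Fin n → F)
    (σ : Equiv.Perm (Fin n → F))
    (hσ : ∀ x, σ x = A.mulVec x + b) :
    Equiv.Perm.sign σ = 1 := by
  have hF : 2 < Fintype.card F :=
    hcard ▸ (Nat.lt_pow_self one_lt_two).trans_le (Nat.pow_le_pow_right two_pos hm)
  have hchar : ringChar F = 2 := FiniteField.even_card_iff_char_two.mpr
    (hcard ▸ Nat.mod_eq_zero_of_dvd (dvd_pow_self 2 (by omega)))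
  have hσ_eq : σ = Equiv.addRight b * Matrix.GeneralLinearGroup.mulVecPerm hA.unit :=
    Equiv.ext fun x => by simp [hσ]
  rw [hσ_eq, map_mul, Perm.sign_addRight hF, Matrix.GeneralLinearGroup.sign_mulVecPerm hchar hF,
    one_mul]

/-- For `q = 2^m`, `m ≥ 2`, every affine automorphism
`x ↦ Ax + b` of `F_q^n` induces an even permutation. -/
theorem stmt9 (m n : ℕ) (hm : 2 ≤ m) (hn : 1 ≤ n)
    (F : Type) [Field F] [Fintype F] [DecidableEq F]
    (hcard : Fintype.card F = 2 ^ m)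
    (A : Matrix (Fin n) (Fin n) F) (hA : IsUnit A) (b : Fin n → F)
    (σ : Equiv.Perm (Fin n → F))
    (hσ : ∀ x, σ x = A.mulVec x + b) :
    Equiv.Perm.sign σ = 1 :=
  stmt9_general m n hm F hcard A hA b σ hσ
end

section
/- Let q = 2 and n ≥ 1. Let J be the triangular automorphism of F_2^n given by J(x_1,...,x_n) = (x_1 + f_1(x_2,...,x_n), x_2 + f_2(x_3,...,x_n), ..., x_n + f_n). Then sgn(J) = (-1)^{M}, where M is the number of monomials of f_1 in which every variable X_2,...,X_n appears with exponent ≥ 1. In particular, J is odd if and only if M is odd. -/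
/-!
Split `F_2^n = F_2 × F_2^{n-1}` along the first coordinate. There `J` becomes the skew product
`(a, y) ↦ (a + f_1(y), J'(y))`, with `J'` the triangular map on the remaining coordinates: a
translation by `f_1(y)` in the fibre over each `y`, followed by `J'` on each of the two sheets
`a = const`. The second factor has sign `sgn(J')² = 1`, and the first is one transposition for
each `y` with `f_1(y) = 1`, so `sgn J = (-1)^{∑_y f_1(y)}`. Over `F_2` the sum `∑_y y^d` is `1`
exactly when every exponent of `d` is positive, hence `∑_y f_1(y) = M` in `F_2`.
-/

open Equiv Finset MvPolynomial

section SkewProduct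

variable {α β : Type*} [Fintype α] [DecidableEq α] [Fintype β] [DecidableEq β]

theorem Equiv.Perm.sign_of_apply_eq_skew (π : Perm (α × β)) (τ : β → Perm α) (h : Perm β)
    (hπ : ∀ a y, π (a, y) = (τ y a, h y)) :
    Perm.sign π = Perm.sign h ^ Fintype.card α * ∏ y, Perm.sign (τ y) := by
  have : π = prodCongrRight (fun _ => h) * prodCongrLeft τ := by
    ext ⟨a, y⟩ <;> simp [hπ]
  rw [this, Perm.sign_mul, Perm.sign_prodCongrRight, Perm.sign_prodCongrLeft, prod_const,
    card_univ]

theorem Equiv.Perm.sign_of_apply_eq_skew_of_even [Nonempty α] (hα : Even (Fintype.card α))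
    (π : Perm (α × β)) (τ : β → Perm α) (h : β → β) (hπ : ∀ a y, π (a, y) = (τ y a, h y)) :
    Perm.sign π = ∏ y, Perm.sign (τ y) := by
  have h_injective : Function.Injective h := by
    intro y y' hy
    obtain ⟨a⟩ := ‹Nonempty α›
    have : π ((τ y).symm a, y) = π ((τ y').symm a, y') := by
      rw [hπ, hπ, apply_symm_apply, apply_symm_apply, hy]
    exact congrArg Prod.snd (π.injective this)
  obtain ⟨k, hk⟩ := hα
  rw [sign_of_apply_eq_skew π τ (ofBijective h h_injective.bijective_of_finite) hπ, hk,
    ← two_mul, pow_mul, Int.units_sq, one_pow, one_mul]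

end SkewProduct

section SplitAtBot

variable {ι : Type*} (R : Type*) [PartialOrder ι] [DecidableEq ι] {i₀ : ι} (hi₀ : IsBot i₀)

def Equiv.funSplitAtBot : (ι → R) ≃ R × ({j // i₀ < j} → R) where
  toFun x := (x i₀, fun j => x j)
  invFun p i := if h : i = i₀ then p.1 else p.2 ⟨i, (hi₀ i).lt_of_ne' h⟩
  left_inv x := by
    funext i
    dsimp only
    split_ifs with h
    · rw [h]
    · rfl
  right_inv p := by
    ext j
    · simp
    · simp [j.2.ne']

variable {R hi₀}

@[simp]
theorem Equiv.funSplitAtBot_apply (x : ι → R) :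
    funSplitAtBot R hi₀ x = (x i₀, fun j : {j // i₀ < j} => x j) := rfl

@[simp]
theorem Equiv.funSplitAtBot_symm_apply_bot (p : R × ({j // i₀ < j} → R)) :
    (funSplitAtBot R hi₀).symm p i₀ = p.1 := dif_pos rfl

theorem Equiv.funSplitAtBot_symm_apply_of_lt (p : R × ({j // i₀ < j} → R)) {j : ι}
    (hj : i₀ < j) : (funSplitAtBot R hi₀).symm p j = p.2 ⟨j, hj⟩ := dif_neg hj.ne'

@[simp]
theorem Equiv.funSplitAtBot_symm_apply_coe (p : R × ({j // i₀ < j} → R)) (j : {j // i₀ < j}) :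
    (funSplitAtBot R hi₀).symm p j = p.2 j := funSplitAtBot_symm_apply_of_lt p j.2

theorem Equiv.permCongr_funSplitAtBot_of_triangular [CommRing R]
    (f : ∀ i, MvPolynomial {j // i < j} R) (σ : Perm (ι → R))
    (hσ : ∀ x i, σ x i = x i + eval (fun j => x j.1) (f i)) (a : R) (y : {j // i₀ < j} → R) :
    (funSplitAtBot R hi₀).permCongr σ (a, y) =
      (a + eval y (f i₀), fun j => y j +
        eval (fun k : {k // j.1 < k} => y ⟨k, j.2.trans k.2⟩) (f j)) := by
  ext j
  · simp only [permCongr_apply, funSplitAtBot_apply, hσ, funSplitAtBot_symm_apply_bot,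
      funSplitAtBot_symm_apply_coe]
  · simp only [permCongr_apply, funSplitAtBot_apply, hσ, funSplitAtBot_symm_apply_coe]
    congr 3
    funext k
    exact funSplitAtBot_symm_apply_of_lt _ (j.2.trans k.2)

end SplitAtBot

theorem ZMod.eq_one_of_ne_zero_two : ∀ a : ZMod 2, a ≠ 0 → a = 1 := by decide

theorem ZMod.sign_addRight_two (t : ZMod 2) : Perm.sign (Equiv.addRight t) = (-1) ^ t := by
  revert t; decide

theorem uzpow_sum {R β : Type*} [CommSemiring R] [Module R (Additive ℤˣ)] (u : ℤˣ)
    (s : Finset β) (c : β → R) : u ^ ∑ y ∈ s, c y = ∏ y ∈ s, u ^ c y := by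
  classical
  induction s using Finset.induction_on with
  | empty => simp
  | insert a s ha ih => rw [prod_insert ha, sum_insert ha, uzpow_add, ih]

theorem ZMod.sum_pow_two (e : ℕ) : ∑ t : ZMod 2, t ^ e = if 1 ≤ e then 1 else 0 := by
  rcases e with _ | e
  · decide
  · rw [if_pos (Nat.le_add_left 1 e), show (univ : Finset (ZMod 2)) = {0, 1} from rfl,
      sum_pair zero_ne_one, zero_pow e.succ_ne_zero, one_pow, zero_add]

theorem MvPolynomial.sum_eval_eq_sum_coeff_mul_prod {R ι : Type*} [CommSemiring R] [Fintype R]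
    [Fintype ι] [DecidableEq ι] (p : MvPolynomial ι R) :
    ∑ x : ι → R, eval x p = ∑ d ∈ p.support, p.coeff d * ∏ i, ∑ t : R, t ^ d i := by
  simp_rw [eval_eq', Fintype.prod_sum, mul_sum]
  exact sum_comm

theorem MvPolynomial.sum_eval_zmod_two {ι : Type*} [Fintype ι] [DecidableEq ι]
    (p : MvPolynomial ι (ZMod 2)) :
    ∑ x, eval x p = #{d ∈ p.support | ∀ i, 1 ≤ d i} := by
  rw [sum_eval_eq_sum_coeff_mul_prod, ← sum_boole]
  refine sum_congr rfl fun d hd => ?_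
  rw [ZMod.eq_one_of_ne_zero_two _ (mem_support_iff.mp hd), one_mul]
  simp_rw [ZMod.sum_pow_two, Fintype.prod_boole]

/-- Over `F_2`, the strictly triangular automorphism
`J(x)_i = x_i + f_i(x_{i+1},…,x_n)` has sign `(-1)^M`, where `M` is the number
of monomials of `f_1` in which every variable `X_2,…,X_n` appears with
exponent `≥ 1`; in particular `J` is odd iff `M` is odd. -/
theorem stmt16 (n : ℕ) (hn : 1 ≤ n)
    (f : ∀ i : Fin n, MvPolynomial {j : Fin n // i < j} (ZMod 2))
    (σ : Equiv.Perm (Fin n → ZMod 2))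
    (hσ : ∀ x i, σ x i = x i + MvPolynomial.eval (fun j => x j.1) (f i))
    (M : ℕ)
    (hM : M = ((f ⟨0, hn⟩).support.filter
      (fun s => ∀ j : {j : Fin n // (⟨0, hn⟩ : Fin n) < j}, 1 ≤ s j)).card) :
    Equiv.Perm.sign σ = (-1) ^ M ∧
      (Equiv.Perm.sign σ = -1 ↔ Odd M) := by
  have hbot : IsBot (⟨0, hn⟩ : Fin n) := fun _ => Nat.zero_le _
  have hsign : Perm.sign σ = (-1) ^ M := by
    rw [← Perm.sign_permCongr (funSplitAtBot (ZMod 2) hbot),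
      Perm.sign_of_apply_eq_skew_of_even (by decide) _
        (fun y => Equiv.addRight (eval y (f ⟨0, hn⟩))) _
        (permCongr_funSplitAtBot_of_triangular f σ hσ)]
    simp_rw [ZMod.sign_addRight_two, ← uzpow_sum, sum_eval_zmod_two, ← hM, uzpow_natCast]
  exact ⟨hsign, hsign ▸ neg_one_pow_eq_neg_one_iff_odd (by decide)⟩
end

section
/- Let q be an odd prime power and n ≥ 1. The set of permutations of F_q^n induced by elementary automorphisms generates a subgroup of the alternating group Alt(F_q^n); i.e., π_q(EA_n(F_q)) ⊆ Alt(F_q^n). -/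
/-!
An elementary automorphism adds to one coordinate a quantity not depending on that coordinate,
so its `k`-th iterate adds `k` times that quantity. Hence its `q`-th power is the identity,
where `q = |F|` is odd, and a permutation of odd order is even since signs are `±1`.
-/

open Equiv Function

theorem Equiv.Perm.sign_eq_one_of_pow_eq_one_of_odd {α : Type*} [Fintype α] [DecidableEq α]
    {σ : Perm α} {k : ℕ} (hk : Odd k) (hσ : σ ^ k = 1) : Perm.sign σ = 1 := by
  calc Perm.sign σ = Perm.sign σ ^ (k % 2) := by rw [Nat.odd_iff.mp hk, pow_one]
    _ = Perm.sign (σ ^ k) := by rw [← Int.units_pow_eq_pow_mod_two, map_pow]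
    _ = 1 := by rw [hσ, map_one]

section Transvection

variable {ι R : Type*} [DecidableEq ι] {τ : Perm (ι → R)} {i : ι} {f : (ι → R) → R}

theorem pow_apply_eq_update_add_nsmul [AddMonoid R] (hf : ∀ x y, f (update x i y) = f x)
    (hτ : ∀ x, τ x = update x i (x i + f x)) (k : ℕ) (x : ι → R) :
    (τ ^ k) x = update x i (x i + k • f x) := by
  induction k with
  | zero => simp
  | succ k ih =>
    rw [pow_succ', Perm.mul_apply, ih, hτ, hf, update_idem, update_self, succ_nsmul, add_assoc]

theorem pow_card_eq_one_of_apply_eq_update_add [AddGroup R] [Fintype R]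
    (hf : ∀ x y, f (update x i y) = f x) (hτ : ∀ x, τ x = update x i (x i + f x)) :
    τ ^ Fintype.card R = 1 := by
  ext x : 1
  rw [pow_apply_eq_update_add_nsmul hf hτ, card_nsmul_eq_zero, add_zero, update_eq_self,
    Perm.one_apply]

end Transvection

theorem MvPolynomial.eval_restrict_update {ι R : Type*} [DecidableEq ι] [CommSemiring R] (i : ι)
    (a : MvPolynomial {j : ι // j ≠ i} R) (x : ι → R) (y : R) :
    eval (fun j => update x i y j.1) a = eval (fun j => x j.1) a := by
  congr 2 with j
  exact update_of_ne j.2 y x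

theorem stmt19_general (q n : ℕ) (hq : Odd q)
    (F : Type) [Field F] [Fintype F] [DecidableEq F] (hcard : Fintype.card F = q)
    (σ : Equiv.Perm (Fin n → F))
    (hσ : σ ∈ Subgroup.closure
      ({τ | ∃ (i : Fin n) (a : MvPolynomial {j : Fin n // j ≠ i} F),
          ∀ x, τ x = Function.update x i
            (x i + MvPolynomial.eval (fun j => x j.1) a)} :
        Set (Equiv.Perm (Fin n → F)))) :
    Equiv.Perm.sign σ = 1 := by
  refine (Subgroup.closure_le Perm.sign.ker).mpr ?_ hσ
  rintro τ ⟨i, a, hτ⟩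
  have hτq : τ ^ q = 1 :=
    hcard ▸ pow_card_eq_one_of_apply_eq_update_add (MvPolynomial.eval_restrict_update i a) hτ
  exact Perm.sign_eq_one_of_pow_eq_one_of_odd hq hτq

/-- For `q` odd, the subgroup of permutations of `F_q^n`
generated by elementary automorphisms is contained in the alternating group,
i.e. every element of it is even. -/
theorem stmt19 (q n : ℕ) (hq : Odd q) (hn : 1 ≤ n)
    (F : Type) [Field F] [Fintype F] [DecidableEq F] (hcard : Fintype.card F = q)
    (σ : Equiv.Perm (Fin n → F))
    (hσ : σ ∈ Subgroup.closure
      ({τ | ∃ (i : Fin n) (a : MvPolynomial {j : Fin n // j ≠ i} F),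
          ∀ x, τ x = Function.update x i
            (x i + MvPolynomial.eval (fun j => x j.1) a)} :
        Set (Equiv.Perm (Fin n → F)))) :
    Equiv.Perm.sign σ = 1 :=
  stmt19_general q n hq F hcard σ hσ
end
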